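/- arXiv:1506.03133 — 2 statements merged into one kernel-verified Lean document; each statement's English description precedes it below -/
import Mathlib

section
/- For every finite simple graph G on vertex set V and every natural number k, the chromatic symmetric polynomial in k variables satisfies X_G^{(k)} = \sum_{F \subseteq E(G)} (-1)^{|F|} \prod_{C} \big(\sum_{i=1}^{k} x_i^{|C|}\big), where F ranges over all subsets of the edge set of G, and for each such F the product ranges over the connected components C of the spanning subgraph of G with vertex set V and edge set F, with |C| denoting the number of vertices in the component C. -/
/-!
Expanding the product of power sums over the components of the spanning subgraph with edge
set `F` gives the sum of the monomials `∏ v, x_{κ v}` over the colourings `κ` that are constant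
on the components, i.e. monochromatic on every edge of `F`. After exchanging the two sums, the
coefficient of `∏ v, x_{κ v}` is the alternating sum `∑ (-1)^|F|` over the subsets `F` of the
monochromatic edges of `κ` in `G`, which is `1` if `κ` is proper and `0` otherwise.
-/

open MvPolynomial in
open Classical in
/-- The chromatic symmetric polynomial of a finite simple graph `G` in `k` variables:
the sum over all proper colourings `κ : V → Fin k` of the monomials `∏ v, x_{κ v}`. -/
noncomputable def chromSymPoly {V : Type} [Fintype V] (G : SimpleGraph V) (k : ℕ) :
    MvPolynomial (Fin k) ℤ :=
  ∑ κ : V → Fin k,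
    if ∀ u v : V, G.Adj u v → κ u ≠ κ v then ∏ v : V, (X (κ v) : MvPolynomial (Fin k) ℤ) else 0

open Finset

theorem Finset.sum_powerset_filter_forall_neg_one_pow {α R : Type*} [DecidableEq α] [CommRing R]
    (s : Finset α) (p : α → Prop) [DecidablePred p] :
    ∑ t ∈ s.powerset with ∀ a ∈ t, p a, (-1 : R) ^ #t = if ∀ a ∈ s, ¬ p a then 1 else 0 := by
  have hfilter : {t ∈ s.powerset | ∀ a ∈ t, p a} = (s.filter p).powerset := by
    ext t
    simp only [mem_filter, mem_powerset, subset_iff]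
    exact ⟨fun h a ha => ⟨h.1 ha, h.2 a ha⟩, fun h => ⟨fun a ha => (h ha).1, fun a ha => (h ha).2⟩⟩
  have h := congrArg (Int.cast : ℤ → R) (sum_powerset_neg_one_pow_card (x := s.filter p))
  push_cast [Int.cast_ite] at h
  simp only [hfilter, h, filter_eq_empty_iff]

namespace SimpleGraph

variable {V ι : Type*} {H : SimpleGraph V}

theorem Reachable.eq_of_forall_adj {κ : V → ι} (hκ : ∀ u v, H.Adj u v → κ u = κ v) {u v : V}
    (huv : H.Reachable u v) : κ u = κ v := by
  obtain ⟨p⟩ := huv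
  induction p with
  | nil => rfl
  | cons h _ ih => exact (hκ _ _ h).trans ih

theorem range_comp_connectedComponentMk :
    Set.range (· ∘ H.connectedComponentMk) = {κ : V → ι | ∀ u v, H.Adj u v → κ u = κ v} := by
  ext κ
  refine ⟨?_, fun hκ => ?_⟩
  · rintro ⟨c, rfl⟩ u v huv
    exact congrArg c (ConnectedComponent.connectedComponentMk_eq_of_adj huv)
  · exact ⟨ConnectedComponent.lift κ fun u v p _ => p.reachable.eq_of_forall_adj hκ, rfl⟩

/- An edge `e` is monochromatic under `κ` iff `(e.map κ).IsDiag`. -/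
theorem forall_fromEdgeSet_adj_imp_eq_iff {s : Set (Sym2 V)} {κ : V → ι} :
    (∀ u v, (fromEdgeSet s).Adj u v → κ u = κ v) ↔ ∀ e ∈ s, (e.map κ).IsDiag := by
  simp only [Sym2.forall, fromEdgeSet_adj, Sym2.map_mk, Sym2.mk_isDiag_iff]
  refine ⟨fun h u v huv => ?_, fun h u v huv => h u v huv.1⟩
  by_cases huv' : u = v
  · exact congrArg κ huv'
  · exact h u v ⟨huv, huv'⟩

theorem forall_adj_imp_ne_iff {κ : V → ι} :
    (∀ u v, H.Adj u v → κ u ≠ κ v) ↔ ∀ e ∈ H.edgeSet, ¬ (e.map κ).IsDiag := by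
  simp [Sym2.forall]

theorem prod_sum_pow_card_supp [Fintype V] [DecidableEq V] [DecidableRel H.Adj] [Fintype ι]
    [DecidableEq ι] {R : Type*} [CommSemiring R] (x : ι → R) :
    ∏ C : H.ConnectedComponent, ∑ i, x i ^ Nat.card C.supp =
      ∑ κ : V → ι, if ∀ u v, H.Adj u v → κ u = κ v then ∏ v, x (κ v) else 0 := by
  classical
  have hinj : Function.Injective fun c : H.ConnectedComponent → ι => c ∘ H.connectedComponentMk :=
    Function.Surjective.injective_comp_right Quot.mk_surjective
  calc ∏ C : H.ConnectedComponent, ∑ i, x i ^ Nat.card C.supp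
      = ∏ C, ∑ i, ∏ _v : {v // H.connectedComponentMk v = C}, x i := by
        simp [Nat.card_eq_fintype_card, Fintype.card_subtype, ConnectedComponent.mem_supp_iff]
    _ = ∑ c : H.ConnectedComponent → ι, ∏ C, ∏ _v : {v // H.connectedComponentMk v = C}, x (c C) :=
        Fintype.prod_sum _
    _ = ∑ c : H.ConnectedComponent → ι, ∏ v, x (c (H.connectedComponentMk v)) :=
        Fintype.sum_congr _ _ fun c => Fintype.prod_fiberwise' _ fun C => x (c C)
    _ = ∑ κ ∈ univ.image (· ∘ H.connectedComponentMk), ∏ v, x (κ v) :=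
        (sum_image (f := fun κ => ∏ v, x (κ v)) fun c _ d _ h => hinj h).symm
    _ = ∑ κ : V → ι, if ∀ u v, H.Adj u v → κ u = κ v then ∏ v, x (κ v) else 0 := by
        rw [← sum_filter]
        congr 1
        ext κ
        simpa using Set.ext_iff.mp range_comp_connectedComponentMk κ

end SimpleGraph

open Classical in
theorem chromSymPoly_eq_sum_powerset {V : Type} [Fintype V] (G : SimpleGraph V) (k : ℕ) :
    chromSymPoly G k =
      ∑ F ∈ G.edgeFinset.powerset,
        (-1 : MvPolynomial (Fin k) ℤ) ^ F.card *
          ∏ C : (SimpleGraph.fromEdgeSet (↑F : Set (Sym2 V))).ConnectedComponent,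
            ∑ i : Fin k, (MvPolynomial.X i : MvPolynomial (Fin k) ℤ) ^ (Nat.card C.supp) := by
  simp only [SimpleGraph.prod_sum_pow_card_supp, SimpleGraph.forall_fromEdgeSet_adj_imp_eq_iff,
    mem_coe, mul_sum, mul_ite, mul_zero]
  rw [sum_comm, chromSymPoly]
  refine sum_congr rfl fun κ _ => ?_
  rw [← sum_filter, ← sum_mul, ← boole_mul]
  congr 1
  simp only [SimpleGraph.forall_adj_imp_ne_iff, ← SimpleGraph.coe_edgeFinset, mem_coe]
  convert (sum_powerset_filter_forall_neg_one_pow G.edgeFinset fun e => (e.map κ).IsDiag).symm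
end

section
/- Let G be a finite simple graph containing three vertices u, v, w that are pairwise adjacent (so that the edges uv, uw, vw form a triangle). Then for every natural number k, the chromatic symmetric polynomials in k variables satisfy X_G^{(k)} = X_{G - uv}^{(k)} + X_{G - uw}^{(k)} - X_{G - uv - uw}^{(k)}, where G - e denotes the graph obtained from G by deleting the edge e. -/
/-- If `u, v, w` form a triangle in `G`, then
`X_G = X_{G - uv} + X_{G - uw} - X_{G - uv - uw}`. -/
theorem chromSymPoly_triangle {V : Type} [Fintype V] (G : SimpleGraph V) (u v w : V)
    (huv : G.Adj u v) (huw : G.Adj u w) (hvw : G.Adj v w) (k : ℕ) :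
    chromSymPoly G k =
      chromSymPoly (G.deleteEdges {s(u, v)}) k + chromSymPoly (G.deleteEdges {s(u, w)}) k -
        chromSymPoly (G.deleteEdges {s(u, v), s(u, w)}) k := by
  classical
  have huvne : u ≠ v := huv.ne
  have huwne : u ≠ w := huw.ne
  have hvwne : v ≠ w := hvw.ne
  unfold chromSymPoly
  rw [← Finset.sum_add_distrib, ← Finset.sum_sub_distrib]
  apply Finset.sum_congr rfl
  intro κ _
  set P : Prop := ∀ a b : V, (G.deleteEdges {s(u, v), s(u, w)}).Adj a b → κ a ≠ κ b with hPdef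
  have hcase : ∀ a b x y : V, s(a, b) = s(x, y) → (a = x ∧ b = y) ∨ (a = y ∧ b = x) := by
    intro a b x y h
    rwa [Sym2.eq_iff] at h
  -- Equivalences for the three modified graphs
  have EG : (∀ a b : V, G.Adj a b → κ a ≠ κ b) ↔ (P ∧ κ u ≠ κ v ∧ κ u ≠ κ w) := by
    constructor
    · intro h
      exact ⟨fun a b hab => h a b (SimpleGraph.deleteEdges_adj.1 hab).1,
        h u v huv, h u w huw⟩
    · rintro ⟨hP, hv, hw⟩ a b hab
      by_cases h1 : s(a, b) = s(u, v)
      · rcases hcase a b u v h1 with ⟨rfl, rfl⟩ | ⟨rfl, rfl⟩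
        · exact hv
        · exact fun h => hv h.symm
      by_cases h2 : s(a, b) = s(u, w)
      · rcases hcase a b u w h2 with ⟨rfl, rfl⟩ | ⟨rfl, rfl⟩
        · exact hw
        · exact fun h => hw h.symm
      · exact hP a b (by rw [SimpleGraph.deleteEdges_adj]; exact ⟨hab, by simp [h1, h2]⟩)
  have E1 : (∀ a b : V, (G.deleteEdges {s(u, v)}).Adj a b → κ a ≠ κ b) ↔ (P ∧ κ u ≠ κ w) := by
    constructor
    · intro h
      refine ⟨fun a b hab => ?_, h u w ?_⟩
      · rw [SimpleGraph.deleteEdges_adj] at hab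
        exact h a b (by
          rw [SimpleGraph.deleteEdges_adj]
          exact ⟨hab.1, by
            intro hm
            exact hab.2 (by simpa using Or.inl (Set.eq_of_mem_singleton hm))⟩)
      · rw [SimpleGraph.deleteEdges_adj]
        refine ⟨huw, ?_⟩
        intro hm
        rcases hcase u w u v (Set.eq_of_mem_singleton hm) with ⟨_, h'⟩ | ⟨h', _⟩
        · exact hvwne h'.symm
        · exact huvne h'
    · rintro ⟨hP, hw⟩ a b hab
      rw [SimpleGraph.deleteEdges_adj] at hab
      by_cases h2 : s(a, b) = s(u, w)
      · rcases hcase a b u w h2 with ⟨rfl, rfl⟩ | ⟨rfl, rfl⟩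
        · exact hw
        · exact fun h => hw h.symm
      · refine hP a b ?_
        rw [SimpleGraph.deleteEdges_adj]
        refine ⟨hab.1, ?_⟩
        intro hm
        rcases hm with hm | hm
        · exact hab.2 (Set.mem_singleton_iff.2 hm)
        · exact h2 hm
  have E2 : (∀ a b : V, (G.deleteEdges {s(u, w)}).Adj a b → κ a ≠ κ b) ↔ (P ∧ κ u ≠ κ v) := by
    constructor
    · intro h
      refine ⟨fun a b hab => ?_, h u v ?_⟩
      · rw [SimpleGraph.deleteEdges_adj] at hab
        exact h a b (by
          rw [SimpleGraph.deleteEdges_adj]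
          exact ⟨hab.1, by
            intro hm
            exact hab.2 (by simpa using Or.inr (Set.eq_of_mem_singleton hm))⟩)
      · rw [SimpleGraph.deleteEdges_adj]
        refine ⟨huv, ?_⟩
        intro hm
        rcases hcase u v u w (Set.eq_of_mem_singleton hm) with ⟨_, h'⟩ | ⟨h', _⟩
        · exact hvwne h'
        · exact huwne h'
    · rintro ⟨hP, hv⟩ a b hab
      rw [SimpleGraph.deleteEdges_adj] at hab
      by_cases h1 : s(a, b) = s(u, v)
      · rcases hcase a b u v h1 with ⟨rfl, rfl⟩ | ⟨rfl, rfl⟩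
        · exact hv
        · exact fun h => hv h.symm
      · refine hP a b ?_
        rw [SimpleGraph.deleteEdges_adj]
        refine ⟨hab.1, ?_⟩
        intro hm
        rcases hm with hm | hm
        · exact h1 hm
        · exact hab.2 (Set.mem_singleton_iff.2 hm)
  by_cases hP : P
  · -- vw is still an edge in the doubly-deleted graph, so κ v ≠ κ w
    have hvwc : κ v ≠ κ w := by
      apply hP v w
      rw [SimpleGraph.deleteEdges_adj]
      refine ⟨hvw, ?_⟩
      intro hm
      rcases hm with hm | hm
      · rcases hcase v w u v hm with ⟨h', _⟩ | ⟨_, h'⟩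
        · exact huvne h'.symm
        · exact huwne h'.symm
      · rcases hcase v w u w hm with ⟨h', _⟩ | ⟨h', _⟩
        · exact huvne h'.symm
        · exact hvwne h'
    by_cases hv : κ u = κ v <;> by_cases hw : κ u = κ w
    · exact absurd (hv.symm.trans hw) hvwc
    · rw [if_neg (by rw [EG]; tauto), if_pos (E1.2 ⟨hP, hw⟩), if_neg (by rw [E2]; tauto),
        if_pos hP]; ring
    · rw [if_neg (by rw [EG]; tauto), if_neg (by rw [E1]; tauto), if_pos (E2.2 ⟨hP, hv⟩),
        if_pos hP]; ring
    · rw [if_pos (EG.2 ⟨hP, hv, hw⟩), if_pos (E1.2 ⟨hP, hw⟩), if_pos (E2.2 ⟨hP, hv⟩),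
        if_pos hP]; ring
  · rw [if_neg (by rw [EG]; tauto), if_neg (by rw [E1]; tauto), if_neg (by rw [E2]; tauto),
      if_neg hP]; ring
end
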